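/- arXiv:2510.15321 — 5 statements merged into one kernel-verified Lean document; each statement's English description precedes it below -/
import Mathlib

section
/- Let (A, ≺) be a well-ordered set (or a well-order on a type A) and f : A → 𝒫(A) any function. Define B_a ⊆ A by strong ≺-induction: B_a = {a} if ⋃_{i≺a} B_i equals {x ∈ f(a) : x ⪯ a}, and B_a = ∅ otherwise. Then B = ⋃_{a∈A} B_a satisfies {x ∈ B : x ⪯ a} ≠ {x ∈ f(a) : x ⪯ a} for every a ∈ A; in particular B is not in the range of f. -/
/-!
Since `B i ⊆ {i}`, the part of `B` below `a` is `(⋃ i < a, B i) ∪ B a`, and `a` does not lie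
in the first term. If `⋃ i < a, B i` equals `f a` below `a`, then `B a = {a}` adds the new
point `a`; otherwise `B a = ∅` and the two sets already differ. This is Cantor's diagonal
argument, carried out along the order.
-/

open Set

theorem union_ite_singleton_ne {A : Type*} {S T : Set A} [Decidable (S = T)] {a : A}
    (ha : a ∉ S) : S ∪ (if S = T then {a} else ∅) ≠ T := by
  split_ifs with hST
  · subst hST
    intro h
    exact ha (h ▸ Or.inr rfl)
  · simpa using hST

section

variable {A : Type*} {B : A → Set A}

theorem notMem_biUnion_Iio_of_subset_singleton [Preorder A] (hB : ∀ i, B i ⊆ {i}) (a : A) :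
    a ∉ ⋃ i ∈ Iio a, B i := by
  simp only [mem_iUnion, mem_Iio, not_exists]
  intro i hia hai
  exact (hB i hai ▸ hia).false

theorem sep_iUnion_le_eq_of_subset_singleton [PartialOrder A] (hB : ∀ i, B i ⊆ {i}) (a : A) :
    {x ∈ ⋃ b, B b | x ≤ a} = (⋃ i ∈ Iio a, B i) ∪ B a := by
  ext x
  simp only [mem_union, mem_iUnion, mem_Iio, exists_prop]
  constructor
  · rintro ⟨⟨i, hxi⟩, hxa⟩
    obtain rfl : x = i := hB i hxi
    rcases hxa.lt_or_eq with hlt | rfl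
    exacts [Or.inl ⟨x, hlt, hxi⟩, Or.inr hxi]
  · rintro (⟨i, hia, hxi⟩ | hxa)
    · obtain rfl : x = i := hB i hxi
      exact ⟨⟨x, hxi⟩, hia.le⟩
    · exact ⟨⟨a, hxa⟩, (hB a hxa).le⟩

end

open Classical in
theorem powerset_wellorder_inductive_general
    {A : Type*} [LinearOrder A]
    (f : A → Set A) (B : A → Set A)
    (hB : ∀ a : A, B a =
      if (⋃ i ∈ Set.Iio a, B i) = {x ∈ f a | x ≤ a} then {a} else ∅) :
    (∀ a : A, {x ∈ ⋃ b, B b | x ≤ a} ≠ {x ∈ f a | x ≤ a}) ∧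
      (⋃ b, B b) ∉ Set.range f := by
  have hsingle : ∀ i, B i ⊆ {i} := fun i => by
    rw [hB i]
    split_ifs <;> simp
  have hne : ∀ a : A, {x ∈ ⋃ b, B b | x ≤ a} ≠ {x ∈ f a | x ≤ a} := fun a => by
    rw [sep_iUnion_le_eq_of_subset_singleton hsingle, hB a]
    exact union_ite_singleton_ne (notMem_biUnion_Iio_of_subset_singleton hsingle a)
  refine ⟨hne, ?_⟩
  rintro ⟨a, ha⟩
  exact hne a (by rw [ha])

open Classical in
/-- Inductive powerset theorem for a well-ordered type: the union `B` of the inductively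
defined sets `B_a` differs from each `f a` on the initial segment `⪯ a`, so `B` is not
in the range of `f`. -/
theorem powerset_wellorder_inductive
    {A : Type*} [LinearOrder A] [WellFoundedLT A]
    (f : A → Set A) (B : A → Set A)
    (hB : ∀ a : A, B a =
      if (⋃ i ∈ Set.Iio a, B i) = {x ∈ f a | x ≤ a} then {a} else ∅) :
    (∀ a : A, {x ∈ ⋃ b, B b | x ≤ a} ≠ {x ∈ f a | x ≤ a}) ∧
      (⋃ b, B b) ∉ Set.range f :=
  powerset_wellorder_inductive_general f B hB
end

section
/- Let f : A → 𝒫(A) and suppose (B, ≺) is a well-ordered subset of A satisfying (∗): f(b) = {x ∈ B : x ≺ b} for all b ∈ B, which is maximal with respect to the initial-segment extension order ⊑ among such pairs. Then B is not in the range of f. -/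
/-!
If `f a = B`, then `a ∉ B`, since otherwise `a ∈ f a = {x ∈ B | x ≺ a}` gives `a ≺ a`.
Placing `a` on top of `B` is then a proper end-extension of `B` that still satisfies `(∗)`,
because the elements below the new top are exactly those of `B = f a`. This contradicts
maximality.
-/

/-- A well-ordered subset of `A`: a carrier set together with a relation that
well-orders it. -/
structure WOSub (A : Type*) where
  carrier : Set A
  r : A → A → Prop
  wo : IsWellOrder carrier (fun x y : carrier => r x y)

/-- `ExtLE V W` (`V ⊑ W`): `V` is an initial segment of `W` (or equal to it),
with compatible orders. -/
def ExtLE {A : Type*} (V W : WOSub A) : Prop :=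
  V.carrier ⊆ W.carrier ∧
  (∀ x ∈ V.carrier, ∀ y ∈ V.carrier, (V.r x y ↔ W.r x y)) ∧
  (∀ x ∈ V.carrier, ∀ y ∈ W.carrier, W.r y x → y ∈ V.carrier)

/-- Condition `(∗)`: `f b = B|_{≺ b}` for all `b ∈ B`. -/
def StarEq {A : Type*} (f : A → Set A) (B : WOSub A) : Prop :=
  ∀ b ∈ B.carrier, f b = {x ∈ B.carrier | B.r x b}

/-- Condition `(⋆)`: `f b ⊆ B|_{≺ b}` for all `b ∈ B`. -/
def StarSub {A : Type*} (f : A → Set A) (B : WOSub A) : Prop :=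
  ∀ b ∈ B.carrier, f b ⊆ {x ∈ B.carrier | B.r x b}

namespace WOSub

variable {A : Type*}

open Classical in
/-- Everything outside `B` is sent to one point placed above all of `B`. -/
noncomputable def toSumTop (B : WOSub A) (x : A) : B.carrier ⊕ Unit :=
  if h : x ∈ B.carrier then .inl ⟨x, h⟩ else .inr ()

abbrev sumTopRel (B : WOSub A) : B.carrier ⊕ Unit → B.carrier ⊕ Unit → Prop :=
  Sum.Lex (fun x y : B.carrier => B.r x y) emptyRelation

theorem toSumTop_of_mem {B : WOSub A} {x : A} (hx : x ∈ B.carrier) :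
    B.toSumTop x = .inl ⟨x, hx⟩ :=
  dif_pos hx

theorem toSumTop_of_notMem {B : WOSub A} {x : A} (hx : x ∉ B.carrier) :
    B.toSumTop x = .inr () :=
  dif_neg hx

theorem toSumTop_injOn (B : WOSub A) (a : A) :
    Set.InjOn B.toSumTop (insert a B.carrier) := by
  intro x hx y hy hxy
  by_cases hxB : x ∈ B.carrier <;> by_cases hyB : y ∈ B.carrier
  · rw [toSumTop_of_mem hxB, toSumTop_of_mem hyB] at hxy
    exact congrArg Subtype.val (Sum.inl_injective hxy)
  · simp [toSumTop_of_mem hxB, toSumTop_of_notMem hyB] at hxy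
  · simp [toSumTop_of_notMem hxB, toSumTop_of_mem hyB] at hxy
  · rw [(Set.mem_insert_iff.mp hx).resolve_right hxB,
      (Set.mem_insert_iff.mp hy).resolve_right hyB]

/-- `B` with `a` placed on top of it (if `a ∈ B`, this is `B` again). -/
noncomputable def insertTop (B : WOSub A) (a : A) : WOSub A where
  carrier := insert a B.carrier
  r x y := B.sumTopRel (B.toSumTop x) (B.toSumTop y)
  wo :=
    haveI := B.wo
    (RelEmbedding.preimage ⟨_, (B.toSumTop_injOn a).injective⟩ B.sumTopRel).isWellOrder

@[simp]
theorem insertTop_carrier (B : WOSub A) (a : A) : (B.insertTop a).carrier = insert a B.carrier :=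
  rfl

theorem insertTop_r_of_mem {B : WOSub A} {a x y : A} (hx : x ∈ B.carrier) (hy : y ∈ B.carrier) :
    (B.insertTop a).r x y ↔ B.r x y := by
  simp [insertTop, sumTopRel, toSumTop_of_mem hx, toSumTop_of_mem hy]

theorem insertTop_r_notMem_left {B : WOSub A} {a x y : A} (hx : x ∉ B.carrier) :
    ¬ (B.insertTop a).r x y := by
  by_cases hy : y ∈ B.carrier <;>
    simp [insertTop, sumTopRel, toSumTop_of_notMem hx, toSumTop_of_mem, toSumTop_of_notMem, hy]

theorem insertTop_r_notMem_right {B : WOSub A} {a x y : A} (hx : x ∈ B.carrier)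
    (hy : y ∉ B.carrier) : (B.insertTop a).r x y := by
  simp [insertTop, sumTopRel, toSumTop_of_mem hx, toSumTop_of_notMem hy]

theorem extLE_insertTop (B : WOSub A) (a : A) : ExtLE B (B.insertTop a) :=
  ⟨Set.subset_insert a B.carrier, fun _ hx _ hy => (insertTop_r_of_mem hx hy).symm,
    fun _ _ _ _ hyx => by_contra fun hy => insertTop_r_notMem_left hy hyx⟩

end WOSub

open WOSub

theorem StarEq.notMem_of_apply_eq {A : Type*} {f : A → Set A} {B : WOSub A} (hB : StarEq f B)
    {a : A} (ha : f a = B.carrier) : a ∉ B.carrier := fun haB => by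
  have haa : a ∈ f a := ha ▸ haB
  rw [hB a haB] at haa
  have := B.wo
  exact irrefl (r := fun x y : B.carrier => B.r x y) ⟨a, haB⟩ haa.2

theorem StarEq.insertTop {A : Type*} {f : A → Set A} {B : WOSub A} (hB : StarEq f B)
    {a : A} (ha : f a = B.carrier) : StarEq f (B.insertTop a) := by
  have haB : a ∉ B.carrier := hB.notMem_of_apply_eq ha
  rintro b (rfl | hb)
  · ext x
    by_cases hx : x ∈ B.carrier
    · simp [ha, hx, insertTop_r_notMem_right hx haB]
    · simp [ha, hx, insertTop_r_notMem_left hx]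
  · ext x
    by_cases hx : x ∈ B.carrier
    · simp [hB b hb, hx, insertTop_r_of_mem hx hb]
    · simp [hB b hb, hx, insertTop_r_notMem_left hx]

theorem maximal_star_not_in_range
    {A : Type*} (f : A → Set A) (B : WOSub A)
    (hstar : StarEq f B)
    (hmax : ∀ B' : WOSub A, ExtLE B B' → StarEq f B' → B'.carrier = B.carrier) :
    B.carrier ∉ Set.range f := by
  rintro ⟨a, ha⟩
  have hext : (B.insertTop a).carrier = B.carrier :=
    hmax _ (B.extLE_insertTop a) (hstar.insertTop ha)
  exact hstar.notMem_of_apply_eq ha (hext ▸ Set.mem_insert a B.carrier)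
end

section
/- For a function f : A → 𝒫(A), define sets B_γ ⊆ A by transfinite induction over all ordinals γ: B_γ = {x ∈ A : f(x) ⊆ ⋃_{i<γ} B_i}. Then the sets B_γ stabilize (there is an ordinal γ₀ with B_γ = B_{γ₀} in the sense that ⋃_{i<γ} B_i is constant for γ ≥ γ₀), and the set 𝓑 = ⋃_γ B_γ is not in the range of f. -/
/-!
Write `C γ = ⋃_{i<γ} B_i`. `C` is monotone and cannot be injective on the ordinals
(Burali-Forti), so `C (α+1) = C α` for some `α`; then `B_α ⊆ C α`, and by induction `C` is
constant from `α` on, whence `𝓑 ⊆ C α`. If `f a = 𝓑`, this puts `a` into `B_α ⊆ 𝓑 = f a`;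
but an element with `a ∈ f a` lies in no `B_γ`, since `a ∈ B_γ` forces `a ∈ f a ⊆ C γ`,
i.e. `a ∈ B_i` for some `i < γ`.
-/

universe u

open Set Order

theorem Ordinal.exists_map_succ_eq_of_monotone {α : Type*} [PartialOrder α] [Small.{u} α]
    {C : Ordinal.{u} → α} (hC : Monotone C) : ∃ a, C (succ a) = C a := by
  obtain ⟨a, b, hab, hne⟩ : ∃ a b, C a = C b ∧ a ≠ b := by
    simpa [Function.Injective] using not_injective_of_ordinal C
  wlog h : a < b generalizing a b
  · exact this b a hab.symm hne.symm (hne.lt_or_gt.resolve_left h)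
  exact ⟨a, le_antisymm (hab ▸ hC (succ_le_of_lt h)) (hC (le_succ a))⟩

theorem monotone_biUnion_Iio {ι A : Type*} [Preorder ι] (B : ι → Set A) :
    Monotone fun γ => ⋃ i ∈ Iio γ, B i :=
  fun _ _ h => biUnion_subset_biUnion_left fun _ hi => lt_of_lt_of_le hi h

theorem iUnion_subset_biUnion_Iio_of_stable {ι A : Type*} [LinearOrder ι] [SuccOrder ι]
    [NoMaxOrder ι] {B : ι → Set A} {α : ι}
    (hα : ∀ γ, α ≤ γ → ⋃ i ∈ Iio γ, B i = ⋃ i ∈ Iio α, B i) :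
    ⋃ γ, B γ ⊆ ⋃ i ∈ Iio α, B i :=
  iUnion_subset fun γ =>
    calc B γ ⊆ ⋃ i ∈ Iio (max (succ γ) α), B i :=
          subset_biUnion_of_mem (lt_of_lt_of_le (lt_succ γ) (le_max_left _ _))
      _ = ⋃ i ∈ Iio α, B i := hα _ (le_max_right _ _)

section TransfiniteIteration

variable {A : Type u} {f : A → Set A} {B : Ordinal.{u} → Set A}

theorem biUnion_Iio_eq_of_succ_eq (hB : ∀ γ, B γ = {x | f x ⊆ ⋃ i ∈ Iio γ, B i})
    {α : Ordinal.{u}} (hα : ⋃ i ∈ Iio (succ α), B i = ⋃ i ∈ Iio α, B i) :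
    ∀ γ, α ≤ γ → ⋃ i ∈ Iio γ, B i = ⋃ i ∈ Iio α, B i := by
  have hBα : B α ⊆ ⋃ i ∈ Iio α, B i := hα ▸ subset_biUnion_of_mem (lt_succ α)
  intro γ
  induction γ using WellFoundedLT.induction with
  | _ γ IH =>
    intro hαγ
    refine (monotone_biUnion_Iio B hαγ).antisymm' (iUnion₂_subset fun i hi => ?_)
    rcases lt_or_ge i α with hiα | hαi
    · exact subset_biUnion_of_mem hiα
    · rwa [hB i, IH i hi hαi, ← hB α]

theorem notMem_of_mem_self (hB : ∀ γ, B γ = {x | f x ⊆ ⋃ i ∈ Iio γ, B i})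
    {a : A} (ha : a ∈ f a) (γ : Ordinal.{u}) : a ∉ B γ := by
  induction γ using WellFoundedLT.induction with
  | _ γ IH =>
    intro haγ
    rw [hB γ] at haγ
    obtain ⟨i, hi, hai⟩ := mem_iUnion₂.1 (haγ ha)
    exact IH i hi hai

end TransfiniteIteration

/-- Transfinite iteration `B_γ = {x | f x ⊆ ⋃_{i<γ} B_i}` stabilizes, and its union
is not in the range of `f`. -/
theorem transfinite_iteration_not_in_range
    {A : Type u} (f : A → Set A) (B : Ordinal.{u} → Set A)
    (hB : ∀ γ : Ordinal.{u}, B γ = {x : A | f x ⊆ ⋃ i ∈ Set.Iio γ, B i}) :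
    (∃ γ₀ : Ordinal.{u}, ∀ γ : Ordinal.{u}, γ₀ ≤ γ →
        (⋃ i ∈ Set.Iio γ, B i) = ⋃ i ∈ Set.Iio γ₀, B i) ∧
      (⋃ γ : Ordinal.{u}, B γ) ∉ Set.range f := by
  obtain ⟨α, hα⟩ := Ordinal.exists_map_succ_eq_of_monotone (monotone_biUnion_Iio B)
  have hstable := biUnion_Iio_eq_of_succ_eq hB hα
  refine ⟨⟨α, hstable⟩, ?_⟩
  rintro ⟨a, ha⟩
  have haα : a ∈ B α := by
    rw [hB α]
    show f a ⊆ _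
    rw [ha]
    exact iUnion_subset_biUnion_Iio_of_stable hstable
  exact notMem_of_mem_self hB (ha ▸ mem_iUnion_of_mem α haα) α haα
end

section
/- For any function f : A → 𝒫(A), the set 𝓓_∞ = {a ∈ A : there is no infinite sequence (x_i)_{i≥1} in A with x_1 ∈ f(a) and x_{i+1} ∈ f(x_i) for all i} is not in the range of f. -/
/-- `𝓓_∞`: the set of points from which no infinite `f`-descending chain starts. -/
def Dinf {A : Type*} (f : A → Set A) : Set A :=
  {a : A | ¬ ∃ x : ℕ → A, x 0 ∈ f a ∧ ∀ i : ℕ, x (i + 1) ∈ f (x i)}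

/-! Mirimanoff's paradox: if `f a = 𝓓_∞`, then `a ∈ 𝓓_∞` because all its successors are,
so `a ∈ f a` and the constant chain `a, a, …` descends forever. -/

section

variable {A : Type*} {f : A → Set A} {a : A}

theorem mem_Dinf_of_subset (h : f a ⊆ Dinf f) : a ∈ Dinf f := by
  rintro ⟨x, hx0, hxs⟩
  exact h hx0 ⟨fun i => x (i + 1), hxs 0, fun i => hxs (i + 1)⟩

theorem notMem_Dinf_of_mem_self (h : a ∈ f a) : a ∉ Dinf f :=
  fun ha => ha ⟨fun _ => a, h, fun _ => h⟩

end

theorem Dinf_not_in_range {A : Type*} (f : A → Set A) :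
    Dinf f ∉ Set.range f := by
  rintro ⟨a, ha⟩
  have haD : a ∈ Dinf f := mem_Dinf_of_subset ha.subset
  exact notMem_Dinf_of_mem_self (ha ▸ haD) haD
end

section
/- For any function f : A → 𝒫(A) and any n > 0, the set 𝓓_n = {a ∈ A : there are no x_1,…,x_n ∈ A with x_1 ∈ f(a), x_{i+1} ∈ f(x_i) for 1 ≤ i < n, and a ∈ f(x_n)} is not in the range of f. -/
/-- `𝓓_n`: the set of `a` admitting no `f`-membership cycle
`x 1 ∈ f a`, `x (i+1) ∈ f (x i)` for `1 ≤ i < n`, and `a ∈ f (x n)`. -/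
def Dn {A : Type*} (f : A → Set A) (n : ℕ) : Set A :=
  {a : A | ¬ ∃ x : ℕ → A, x 1 ∈ f a ∧
      (∀ i : ℕ, 1 ≤ i → i < n → x (i + 1) ∈ f (x i)) ∧ a ∈ f (x n)}

/-!
A diagonal argument. Suppose `𝓓_n = f c`. If `c ∈ 𝓓_n` then `c ∈ f c`, and the constant sequence
at `c` is a forbidden cycle through `c`. If `c ∉ 𝓓_n`, there is a cycle `c → x₁ → ⋯ → xₙ → c`;
rotating it gives a cycle `x₁ → ⋯ → xₙ → c → x₁` through `x₁`, so `x₁ ∈ f c = 𝓓_n` lies outside `𝓓_n`.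
-/

section

variable {A : Type*} {f : A → Set A} {n : ℕ} {a : A}

theorem notMem_Dn_of_mem_self (ha : a ∈ f a) : a ∉ Dn f n :=
  fun hD => hD ⟨fun _ => a, ha, fun _ _ _ => ha, ha⟩

theorem exists_mem_notMem_Dn_of_notMem_Dn (hn : 0 < n) (ha : a ∉ Dn f n) :
    ∃ b ∈ f a, b ∉ Dn f n := by
  obtain ⟨x, hx1, hchain, hxn⟩ := not_not.mp ha
  set y := Function.update (fun i => x (i + 1)) n a
  have hyn : y n = a := Function.update_self ..
  have hy : ∀ i ≠ n, y i = x (i + 1) := fun i hi => Function.update_of_ne hi ..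
  have hy_succ : ∀ i < n, y (i + 1) ∈ f (x (i + 1)) := by
    intro i hi
    rcases (show i + 1 ≤ n from hi).eq_or_lt with hlast | hinner
    · rwa [hlast, hyn]
    · rw [hy _ hinner.ne]
      exact hchain (i + 1) (Nat.le_add_left 1 i) hinner
  refine ⟨x 1, hx1, fun hD => hD ⟨y, hy_succ 0 hn, fun i _ hin => ?_, ?_⟩⟩
  · rw [hy i hin.ne]
    exact hy_succ i hin
  · rwa [hyn]

end

theorem Dn_not_in_range {A : Type*} (f : A → Set A) (n : ℕ) (hn : 0 < n) :
    Dn f n ∉ Set.range f := by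
  rintro ⟨c, hc⟩
  by_cases hcD : c ∈ Dn f n
  · exact notMem_Dn_of_mem_self (hc ▸ hcD) hcD
  · obtain ⟨b, hbc, hbD⟩ := exists_mem_notMem_Dn_of_notMem_Dn hn hcD
    exact hbD (hc ▸ hbc)
end
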